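/- Let A be a KV-algebra over a field F of characteristic zero and W a KV-bimodule of A, and let G := A ⊕ W be the semidirect product KV-algebra with multiplication (a,w)(a',w') := (aa', aw' + wa'). Then {0} ⊕ J(W) ⊆ J(G) and J(G) ⊆ J(A) ⊕ J(W); consequently J(G) is a graded subspace: if (a₀,w₀) ∈ J(G) then (a₀,0) ∈ J(G) and (0,w₀) ∈ J(G). -/

import Mathlib

/-!
Everything follows from splitting the associator of `G = A ⊕ W` into components. Its `A`-component
is the associator of `A`, and by bilinearity its `W`-component at `((a,v), (b,u), (ξ₁,ξ₂))` is
`(a,b,ξ₂) + (a,u,ξ₁) + (v,b,ξ₁)`. The three summands depend on independent arguments, so `ξ` is a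
Jacobi element of `G` exactly when `ξ₁ ∈ J(A)`, `ξ₂ ∈ J(W)` and `ξ₁` kills the two mixed
associators. These conditions constrain `ξ₁` and `ξ₂` separately, which gives all three claims.
-/

namespace KV

variable {R A M W : Type*} [CommSemiring R]
  [AddCommGroup A] [Module R A] [AddCommGroup M] [Module R M] [AddCommGroup W] [Module R W]

/-- The Jacobi elements `J(M)` of a left `A`-action; `act = mul` gives `J(A)`. -/
def jacobiSubmodule (mul : A →ₗ[R] A →ₗ[R] A) (act : A →ₗ[R] M →ₗ[R] M) : Submodule R M where
  carrier := {m | ∀ a b, act (mul a b) m - act a (act b m) = 0}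
  add_mem' {m n} hm hn a b := by
    simp only [map_add, add_sub_add_comm, hm a b, hn a b, add_zero]
  zero_mem' _ _ := by simp only [map_zero, sub_zero]
  smul_mem' c m hm a b := by
    simp only [map_smul, ← smul_sub, hm a b, smul_zero]

theorem mem_jacobiSubmodule {mul : A →ₗ[R] A →ₗ[R] A} {act : A →ₗ[R] M →ₗ[R] M} {m : M} :
    m ∈ jacobiSubmodule mul act ↔ ∀ a b, act (mul a b) m - act a (act b m) = 0 :=
  Iff.rfl

variable (mul : A →ₗ[R] A →ₗ[R] A) (l : A →ₗ[R] W →ₗ[R] W) (r : W →ₗ[R] A →ₗ[R] W)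

def semidirectMul : A × W →ₗ[R] A × W →ₗ[R] A × W :=
  LinearMap.mk₂ R (fun x y => (mul x.1 y.1, l x.1 y.2 + r x.2 y.1))
    (fun x x' y => by ext <;> simp only [Prod.fst_add, Prod.snd_add, map_add,
      LinearMap.add_apply, add_add_add_comm])
    (fun c x y => by ext <;> simp [smul_add])
    (fun x y y' => by ext <;> simp only [Prod.fst_add, Prod.snd_add, map_add, add_add_add_comm])
    (fun c x y => by ext <;> simp [smul_add])

@[simp]
theorem semidirectMul_apply (x y : A × W) :
    semidirectMul mul l r x y = (mul x.1 y.1, l x.1 y.2 + r x.2 y.1) :=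
  rfl

theorem semidirectMul_assoc_snd (x y ξ : A × W) :
    (semidirectMul mul l r (semidirectMul mul l r x y) ξ
        - semidirectMul mul l r x (semidirectMul mul l r y ξ)).2
      = (l (mul x.1 y.1) ξ.2 - l x.1 (l y.1 ξ.2))
        + (r (l x.1 y.2) ξ.1 - l x.1 (r y.2 ξ.1))
        + (r (r x.2 y.1) ξ.1 - r x.2 (mul y.1 ξ.1)) := by
  simp only [semidirectMul_apply, Prod.snd_sub, map_add, LinearMap.add_apply]
  abel

theorem mem_jacobiSubmodule_semidirectMul_iff {ξ : A × W} :
    ξ ∈ jacobiSubmodule (semidirectMul mul l r) (semidirectMul mul l r) ↔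
      ξ.1 ∈ jacobiSubmodule mul mul ∧ ξ.2 ∈ jacobiSubmodule mul l ∧
        (∀ a w, r (l a w) ξ.1 - l a (r w ξ.1) = 0) ∧
        (∀ w b, r (r w b) ξ.1 - r w (mul b ξ.1) = 0) := by
  simp only [mem_jacobiSubmodule]
  constructor
  · intro h
    refine ⟨fun a b => congrArg Prod.fst (h (a, 0) (b, 0)), fun a b => ?_,
      fun a w => ?_, fun w b => ?_⟩
    · simpa [semidirectMul_assoc_snd] using congrArg Prod.snd (h (a, 0) (b, 0))
    · simpa [semidirectMul_assoc_snd] using congrArg Prod.snd (h (a, 0) (0, w))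
    · simpa [semidirectMul_assoc_snd] using congrArg Prod.snd (h (0, w) (b, 0))
  · rintro ⟨hA, hW, hl, hr⟩ x y
    ext
    · exact hA x.1 y.1
    · rw [semidirectMul_assoc_snd, hW, hl, hr, add_zero, add_zero, Prod.snd_zero]

end KV

open KV in
theorem jacobi_of_semidirect_product_general
    {F : Type*} [Field F]
    {A : Type*} [AddCommGroup A] [Module F A]
    {W : Type*} [AddCommGroup W] [Module F W]
    (mul : A →ₗ[F] A →ₗ[F] A)
    (l : A →ₗ[F] W →ₗ[F] W) (r : W →ₗ[F] A →ₗ[F] W) :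
    letI mulG : A × W → A × W → A × W :=
      fun x y => (mul x.1 y.1, l x.1 y.2 + r x.2 y.1)
    letI JG : Set (A × W) :=
      {ξ : A × W | ∀ x y : A × W, mulG (mulG x y) ξ - mulG x (mulG y ξ) = 0}
    letI JA : Set A :=
      {ξ : A | ∀ a b : A, mul (mul a b) ξ - mul a (mul b ξ) = 0}
    letI JW : Set W :=
      {w : W | ∀ a b : A, l (mul a b) w - l a (l b w) = 0}
    -- `{0} ⊕ J(W) ⊆ J(G)`
    (∀ w ∈ JW, ((0 : A), w) ∈ JG)
    -- `J(G) ⊆ J(A) ⊕ J(W)`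
    ∧ (∀ ξ ∈ JG, ξ.1 ∈ JA ∧ ξ.2 ∈ JW)
    -- `J(G)` is graded
    ∧ (∀ ξ ∈ JG, (ξ.1, (0 : W)) ∈ JG ∧ ((0 : A), ξ.2) ∈ JG) := by
  have hJG := fun ξ => mem_jacobiSubmodule_semidirectMul_iff mul l r (ξ := ξ)
  have hzero := (jacobiSubmodule mul mul).zero_mem
  refine ⟨fun w hw => (hJG (0, w)).2 ⟨hzero, hw, by simp, by simp⟩,
    fun ξ hξ => ((hJG ξ).1 hξ).imp_right And.left, fun ξ hξ => ?_⟩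
  obtain ⟨hA, hW, hl, hr⟩ := (hJG ξ).1 hξ
  exact ⟨(hJG (ξ.1, 0)).2 ⟨hA, Submodule.zero_mem _, hl, hr⟩,
    (hJG (0, ξ.2)).2 ⟨hzero, hW, by simp, by simp⟩⟩

/-- for the semidirect product `G = A ⊕ W` with
`(a,w)(a',w') = (aa', aw' + wa')`, one has `{0} ⊕ J(W) ⊆ J(G)` and
`J(G) ⊆ J(A) ⊕ J(W)`; consequently `J(G)` is a graded subspace. -/
theorem jacobi_of_semidirect_product
    {F : Type*} [Field F] [CharZero F]
    {A : Type*} [AddCommGroup A] [Module F A]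
    {W : Type*} [AddCommGroup W] [Module F W]
    (mul : A →ₗ[F] A →ₗ[F] A)
    (hA : ∀ a b c : A, mul (mul a b) c - mul a (mul b c)
        = mul (mul b a) c - mul b (mul a c))
    (l : A →ₗ[F] W →ₗ[F] W) (r : W →ₗ[F] A →ₗ[F] W)
    (hW1 : ∀ (a b : A) (w : W), l (mul a b) w - l a (l b w)
        = l (mul b a) w - l b (l a w))
    (hW2 : ∀ (a : A) (w : W) (b : A), r (l a w) b - l a (r w b)
        = r (r w a) b - r w (mul a b)) :
    letI mulG : A × W → A × W → A × W :=
      fun x y => (mul x.1 y.1, l x.1 y.2 + r x.2 y.1)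
    letI JG : Set (A × W) :=
      {ξ : A × W | ∀ x y : A × W, mulG (mulG x y) ξ - mulG x (mulG y ξ) = 0}
    letI JA : Set A :=
      {ξ : A | ∀ a b : A, mul (mul a b) ξ - mul a (mul b ξ) = 0}
    letI JW : Set W :=
      {w : W | ∀ a b : A, l (mul a b) w - l a (l b w) = 0}
    -- `{0} ⊕ J(W) ⊆ J(G)`
    (∀ w ∈ JW, ((0 : A), w) ∈ JG)
    -- `J(G) ⊆ J(A) ⊕ J(W)`
    ∧ (∀ ξ ∈ JG, ξ.1 ∈ JA ∧ ξ.2 ∈ JW)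
    -- `J(G)` is graded
    ∧ (∀ ξ ∈ JG, (ξ.1, (0 : W)) ∈ JG ∧ ((0 : A), ξ.2) ∈ JG) :=
  jacobi_of_semidirect_product_general mul l r
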